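/- Every element (s,C) of Γ_k(X) has a unique largest layer point below it: there exists a unique layer point (t,D) of Γ_k(X) with (t,D) ≤ (s,C) such that every layer point ℓ of Γ_k(X) with ℓ ≤ (s,C) satisfies ℓ ≤ (t,D); moreover this (t,D) satisfies D = C as subsets of X. -/

import Mathlib

variable {Z : Type*} [MetricSpace Z]

/-- Vertex set `V_{s,k}(X)` of the degree-Rips complex: points of `X` having at
least `k` other points of `X` within distance `s`. -/
def drVertex (X : Set Z) (k : ℕ) (s : ℝ) : Set Z :=
  {x ∈ X | k ≤ {y ∈ X | y ≠ x ∧ dist x y ≤ s}.ncard}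

/-- The generating relation for components: two vertices at distance at most `s`. -/
def drStep (X : Set Z) (k : ℕ) (s : ℝ) (x y : Z) : Prop :=
  x ∈ drVertex X k s ∧ y ∈ drVertex X k s ∧ dist x y ≤ s

/-- `C` is a degree-Rips component (an element of `π₀ L_{s,k}(X)`): the class of
some vertex `x` under the equivalence relation generated by `drStep`. -/
def drComp (X : Set Z) (k : ℕ) (s : ℝ) (C : Set Z) : Prop :=
  ∃ x ∈ drVertex X k s, C = {y | Relation.ReflTransGen (drStep X k s) x y}

/-- `(t, C)` is a layer point of `Γ_k(X)`: it is an element of the hierarchy, and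
every element `(s, D) ≤ (t, C)` with `s < t` has `D` a proper subset of `C`. -/
def IsLayer (X : Set Z) (k : ℕ) (t : ℝ) (C : Set Z) : Prop :=
  0 ≤ t ∧ drComp X k t C ∧
    ∀ s D, 0 ≤ s → drComp X k s D → s < t → D ⊆ C → D ⊂ C

/-- `(t, C)` is a branch point of `Γ_k(X)`. -/
def IsBranch (X : Set Z) (k : ℕ) (t : ℝ) (C : Set Z) : Prop :=
  0 ≤ t ∧ drComp X k t C ∧
    ((∀ s D, 0 ≤ s → drComp X k s D → s < t → ¬D ⊆ C) ∨
      ∃ s₀, s₀ < t ∧ ∀ s, s₀ ≤ s → s < t →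
        ∃ D₁ D₂, drComp X k s D₁ ∧ drComp X k s D₂ ∧ D₁ ≠ D₂ ∧ D₁ ⊆ C ∧ D₂ ⊆ C)

/-- `(t, D)` is the maximal layer point below the element `(u, C)` of `Γ_k(X)`:
it is a layer point, `(t, D) ≤ (u, C)`, and every layer point below `(u, C)`
is below `(t, D)`. -/
def IsMaxLayerBelow (X : Set Z) (k : ℕ) (u : ℝ) (C : Set Z) (t : ℝ) (D : Set Z) : Prop :=
  IsLayer X k t D ∧ t ≤ u ∧ D ⊆ C ∧
    ∀ t' D', IsLayer X k t' D' → t' ≤ u → D' ⊆ C → t' ≤ t ∧ D' ⊆ D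

/-- `t` is a layer parameter of `X`. -/
def IsLayerParam (X : Set Z) (k : ℕ) (t : ℝ) : Prop :=
  ∃ C, IsLayer X k t C

/-- A stability map `θ : Y → X` (encoded as a map `Z → Z` carrying `Y` into `X`). -/
def IsStabilityMap (X Y : Set Z) (k : ℕ) (r : ℝ) (θ : Z → Z) : Prop :=
  (∀ y ∈ Y, θ y ∈ X) ∧
    ∀ s : ℝ, 0 ≤ s →
      (∀ y₁ y₂, y₁ ∈ drVertex Y k s → y₂ ∈ drVertex Y k s → dist y₁ y₂ ≤ s →
          θ y₁ ∈ drVertex X k (s + 2 * r) ∧ θ y₂ ∈ drVertex X k (s + 2 * r) ∧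
          dist (θ y₁) (θ y₂) ≤ s + 2 * r) ∧
      (∀ x ∈ drVertex X k s, ∃ C, drComp X k (s + 2 * r) C ∧ x ∈ C ∧ θ x ∈ C) ∧
      (∀ y ∈ drVertex Y k s, ∃ D, drComp Y k (s + 2 * r) D ∧ y ∈ D ∧ θ y ∈ D)

/-- Vertices of the degree-Rips complex at scale infinity: points with at least
`k` other points. -/
def drVertexInf (W : Set Z) (k : ℕ) : Set Z :=
  {w ∈ W | k ≤ {w' ∈ W | w' ≠ w}.ncard}

/-- Phase change numbers: distances between distinct vertices at scale infinity. -/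
def IsPhaseChange (W : Set Z) (k : ℕ) (t : ℝ) : Prop :=
  ∃ w₁ ∈ drVertexInf W k, ∃ w₂ ∈ drVertexInf W k, w₁ ≠ w₂ ∧ t = dist w₁ w₂

/-!
A layer point `(t, C)` is nothing but the component `C` taken at its birth scale, the least
`t ≥ 0` at which `C` is a component. That least scale exists because the components only change
at the finitely many pairwise distances of `X`. A component at scales `u ≤ w` is one at every
scale in between, so a layer point `(t', D') ≤ (s, C)` with `t'` above the birth scale of `C`
would have `D' = C`, contradicting the minimality of its own birth scale.
-/

open Relation

section DegreeRips

variable {X : Set Z} {k : ℕ} {s t u w : ℝ} {C D : Set Z}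

lemma drVertex_mono (hX : X.Finite) (hst : s ≤ t) : drVertex X k s ⊆ drVertex X k t :=
  fun _ ⟨hx, hk⟩ => ⟨hx, hk.trans <| Set.ncard_le_ncard
    (fun _ ⟨hy, hne, hd⟩ => ⟨hy, hne, hd.trans hst⟩) (hX.subset fun _ hy => hy.1)⟩

lemma drStep_mono (hX : X.Finite) (hst : s ≤ t) : drStep X k s ≤ drStep X k t :=
  fun _ _ ⟨hx, hy, hd⟩ => ⟨drVertex_mono hX hst hx, drVertex_mono hX hst hy, hd.trans hst⟩

instance drStep_symm : Std.Symm (drStep X k s) :=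
  ⟨fun x y ⟨hx, hy, hd⟩ => ⟨hy, hx, dist_comm x y ▸ hd⟩⟩

lemma setOf_reflTransGen_drStep_mono (hX : X.Finite) (hst : s ≤ t) (x : Z) :
    {y | ReflTransGen (drStep X k s) x y} ⊆ {y | ReflTransGen (drStep X k t) x y} :=
  fun _ => ReflTransGen.mono (drStep_mono hX hst) _ _

lemma drComp.eq_setOf_of_mem (hC : drComp X k s C) {x : Z} (hx : x ∈ C) :
    C = {y | ReflTransGen (drStep X k s) x y} := by
  obtain ⟨x₀, -, rfl⟩ := hC
  ext y
  exact ⟨fun hy => (Std.Symm.symm _ _ hx).trans hy, fun hy => ReflTransGen.trans hx hy⟩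

lemma drComp.eq_of_subset (hD : drComp X k s D) (hC : drComp X k s C) (hDC : D ⊆ C) :
    D = C := by
  obtain ⟨x, -, rfl⟩ := hD
  exact (hC.eq_setOf_of_mem (hDC ReflTransGen.refl)).symm

lemma drComp_of_le_of_le (hX : X.Finite) (hu : drComp X k u C) (hw : drComp X k w C)
    (hut : u ≤ t) (htw : t ≤ w) : drComp X k t C := by
  obtain ⟨x, hx, rfl⟩ := hu
  refine ⟨x, drVertex_mono hX hut hx, (setOf_reflTransGen_drStep_mono hX hut x).antisymm ?_⟩
  rw [hw.eq_setOf_of_mem ReflTransGen.refl]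
  exact setOf_reflTransGen_drStep_mono hX htw x

lemma drComp_iff_of_dist_le_iff (h : ∀ x ∈ X, ∀ y ∈ X, dist x y ≤ s ↔ dist x y ≤ t) :
    drComp X k s C ↔ drComp X k t C := by
  have hV : drVertex X k s = drVertex X k t := Set.ext fun x =>
    and_congr_right fun hx => by
      rw [Set.ext fun y => and_congr_right fun hy => and_congr_right fun _ => h x hx y hy]
  have hS : drStep X k s = drStep X k t := funext₂ fun x y => propext <| by
    simp only [drStep, hV]
    exact and_congr_right fun hx => and_congr_right fun hy => h x hx.1 y hy.1
  simp only [drComp, hV, hS]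

lemma exists_mem_insert_zero_image2_dist_drComp_iff (hX : X.Finite) (ht : 0 ≤ t) :
    ∃ m ∈ insert 0 (Set.image2 dist X X), m ≤ t ∧
      ∀ C, drComp X k t C ↔ drComp X k m C := by
  obtain ⟨m, ⟨hmT, hmt⟩, hmax⟩ :=
    Set.exists_max_image {d ∈ insert 0 (Set.image2 dist X X) | d ≤ t} id
      (((hX.image2 dist hX).insert 0).subset fun _ hd => hd.1) ⟨0, Set.mem_insert 0 _, ht⟩
  refine ⟨m, hmT, hmt, fun C => drComp_iff_of_dist_le_iff fun x hx y hy => ?_⟩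
  exact ⟨fun hd => hmax _ ⟨Or.inr ⟨x, hx, y, hy, rfl⟩, hd⟩, fun hd => hd.trans hmt⟩

lemma exists_isLeast_drComp (hX : X.Finite) (hs : 0 ≤ s) (hC : drComp X k s C) :
    ∃ t₀, IsLeast {t | 0 ≤ t ∧ drComp X k t C} t₀ := by
  set T := insert 0 (Set.image2 dist X X)
  have hT : ∀ m ∈ T, 0 ≤ m := by
    rintro m (rfl | ⟨x, -, y, -, rfl⟩)
    exacts [le_rfl, dist_nonneg]
  obtain ⟨ms, hmsT, -, hms⟩ := exists_mem_insert_zero_image2_dist_drComp_iff (k := k) hX hs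
  obtain ⟨m₀, ⟨hm₀T, hm₀C⟩, hmin⟩ :=
    Set.exists_min_image {m ∈ T | drComp X k m C} id
      (((hX.image2 dist hX).insert 0).subset fun _ hm => hm.1) ⟨ms, hmsT, (hms C).1 hC⟩
  refine ⟨m₀, ⟨hT _ hm₀T, hm₀C⟩, fun t ⟨ht, htC⟩ => ?_⟩
  obtain ⟨m, hmT, hmt, hm⟩ := exists_mem_insert_zero_image2_dist_drComp_iff (k := k) hX ht
  exact (hmin m ⟨hmT, (hm C).1 htC⟩).trans hmt

lemma isLayer_iff_isLeast : IsLayer X k t C ↔ IsLeast {u | 0 ≤ u ∧ drComp X k u C} t := by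
  refine ⟨fun ⟨ht, hC, hl⟩ => ⟨⟨ht, hC⟩, fun u ⟨hu, huC⟩ => le_of_not_gt fun hut =>
    (hl u C hu huC hut subset_rfl).ne rfl⟩, fun ⟨⟨ht, hC⟩, hmin⟩ => ⟨ht, hC, ?_⟩⟩
  exact fun u D hu hD hut hDC => hDC.ssubset_of_ne fun hDC' =>
    (hmin ⟨hu, hDC' ▸ hD⟩).not_gt hut

lemma isMaxLayerBelow_of_isLeast (hX : X.Finite) (hs : 0 ≤ s) (hC : drComp X k s C)
    (h : IsLeast {t | 0 ≤ t ∧ drComp X k t C} t) : IsMaxLayerBelow X k s C t C := by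
  refine ⟨isLayer_iff_isLeast.2 h, h.2 ⟨hs, hC⟩, subset_rfl,
    fun t' D' hl ht's hD' => ⟨le_of_not_gt fun htt' => ?_, hD'⟩⟩
  obtain rfl := hl.2.1.eq_of_subset (drComp_of_le_of_le hX h.1.2 hC htt'.le ht's) hD'
  exact htt'.not_ge ((isLayer_iff_isLeast.1 hl).2 h.1)

lemma IsMaxLayerBelow.unique {t' : ℝ} {D' : Set Z} (h : IsMaxLayerBelow X k s C t D)
    (h' : IsMaxLayerBelow X k s C t' D') : t = t' ∧ D = D' := by
  obtain ⟨ht, hD⟩ := h.2.2.2 t' D' h'.1 h'.2.1 h'.2.2.1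
  obtain ⟨ht', hD'⟩ := h'.2.2.2 t D h.1 h.2.1 h.2.2.1
  exact ⟨ht'.antisymm ht, hD'.antisymm hD⟩

end DegreeRips

/-- every element `(s, C)` of `Γ_k(X)` has a unique largest layer
point below it, and that layer point has component equal to `C`. -/
theorem max_layer_point_below_exists_unique (X : Set Z) (hXfin : X.Finite) (k : ℕ)
    (s : ℝ) (C : Set Z) (hs : 0 ≤ s) (hC : drComp X k s C) :
    (∃ t D, IsMaxLayerBelow X k s C t D ∧ D = C) ∧
      ∀ t D t' D', IsMaxLayerBelow X k s C t D → IsMaxLayerBelow X k s C t' D' →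
        t = t' ∧ D = D' := by
  obtain ⟨t₀, ht₀⟩ := exists_isLeast_drComp hXfin hs hC
  exact ⟨⟨t₀, C, isMaxLayerBelow_of_isLeast hXfin hs hC ht₀, rfl⟩,
    fun _ _ _ _ => IsMaxLayerBelow.unique⟩
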